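/- Let k ≥ 3 be an integer and set n := 4k + 2. Let G be the graph obtained from two vertex-disjoint complete graphs, each on 2k + 1 vertices, by adding a matching of size 2 between them (two disjoint edges, each having one endpoint in each clique). Then G is Hamiltonian, δ(G) = 2k = n/2 − 1, and G contains no 2-factor consisting of exactly two cycles of lengths 2k + 2 and 2k. -/

import Mathlib

/-!
Hamilton cycle: run through the left clique from `inl 0` to `inl 1`, cross to `inr 1`, run through
the right clique to `inr 0` and cross back.

Minimum degree: every vertex sees its whole clique, and a vertex other than `inl 0, inl 1, inr 0,
inr 1` sees nothing else.

No 2-factor with cycles of lengths `2k + 2` and `2k`: in a graph with all degrees even, an even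
number of edges leaves any vertex set. Applied to the left half of a cycle of the 2-factor, this
says that a cycle meeting both cliques uses both matching edges. The `(2k + 2)`-cycle does not fit
into one clique, so it contains both matching edges and their four endpoints; the `2k`-cycle is then
confined to a single clique minus two vertices, which has only `2k - 1` vertices.
-/

/-- `C` is a Hamilton cycle on its (whole) vertex set: a connected 2-regular graph. -/
def IsHamCycleOn {V : Type*} (C : SimpleGraph V) : Prop :=
  C.Connected ∧ ∀ v : V, (C.neighborSet v).ncard = 2

/-- `H` is a 2-factor of `G`: a spanning 2-regular subgraph of `G`
(viewed as a graph on the same vertex set). -/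
def IsTwoFactor {V : Type*} (G H : SimpleGraph V) : Prop :=
  H ≤ G ∧ ∀ v : V, (H.neighborSet v).ncard = 2

/-- The base relation for the example graph: two disjoint cliques of order `2k+1`
(the two summands), joined by the matching `{(inl 0, inr 0), (inl 1, inr 1)}`. -/
def exRel (k : ℕ) : (Fin (2 * k + 1) ⊕ Fin (2 * k + 1)) →
    (Fin (2 * k + 1) ⊕ Fin (2 * k + 1)) → Prop
  | Sum.inl _, Sum.inl _ => True
  | Sum.inr _, Sum.inr _ => True
  | Sum.inl a, Sum.inr b => (a.val = 0 ∧ b.val = 0) ∨ (a.val = 1 ∧ b.val = 1)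
  | Sum.inr _, Sum.inl _ => False

/-- The example graph: two disjoint copies of `K_{2k+1}` joined by a matching of size 2. -/
def exGraph (k : ℕ) : SimpleGraph (Fin (2 * k + 1) ⊕ Fin (2 * k + 1)) :=
  SimpleGraph.fromRel (exRel k)

open Finset SimpleGraph Sum

theorem Fin.val_one_of_one_lt {n : ℕ} [NeZero n] (hn : 1 < n) : ((1 : Fin n) : ℕ) = 1 := by
  rw [Fin.val_one', Nat.mod_eq_of_lt hn]

theorem Fin.zero_ne_one_of_one_lt {n : ℕ} [NeZero n] (hn : 1 < n) : (0 : Fin n) ≠ 1 :=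
  Fin.ne_of_val_ne (by simp; omega)

theorem Set.ncard_image_compl_singleton {V : Type*} {n : ℕ} {ι : Fin (n + 1) → V}
    (hι : Function.Injective ι) (a : Fin (n + 1)) : (ι '' {a}ᶜ).ncard = n := by
  rw [Set.ncard_image_of_injective _ hι, Set.ncard_compl]
  simp

theorem Set.ncard_le_of_subset_range {α β : Type*} [Finite β] {ι : α → β}
    (hι : Function.Injective ι) {s : Set β} (hs : s ⊆ Set.range ι) :
    s.ncard ≤ Nat.card α :=
  Set.ncard_range_of_injective hι ▸ Set.ncard_le_ncard hs

theorem Set.ncard_add_two_le_of_subset_range {α β : Type*} [Finite β] {ι : α → β}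
    (hι : Function.Injective ι) {s : Set β} (hs : s ⊆ Set.range ι) {x y : α} (hxy : x ≠ y)
    (hx : ι x ∉ s) (hy : ι y ∉ s) : s.ncard + 2 ≤ Nat.card α := by
  have hsub : insert (ι x) (insert (ι y) s) ⊆ Set.range ι := by
    simp [Set.insert_subset_iff, hs]
  have hx' : ι x ∉ insert (ι y) s := by simp [hι.ne hxy, hx]
  calc s.ncard + 2 = (insert (ι x) (insert (ι y) s)).ncard := by
        rw [Set.ncard_insert_of_notMem hx', Set.ncard_insert_of_notMem hy]
    _ ≤ Nat.card α := Set.ncard_le_of_subset_range hι hsub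

namespace SimpleGraph

variable {V : Type*} [Fintype V] [DecidableEq V] (H : SimpleGraph V) [DecidableRel H.Adj]

theorem even_sum_card_neighborFinset_inter (S : Finset V) :
    Even (∑ v ∈ S, #(H.neighborFinset v ∩ S)) := by
  have hdeg (v : (S : Set V)) : (H.induce S).degree v = #(H.neighborFinset v ∩ S) := by
    rw [← card_neighborFinset_eq_degree]
    convert congrArg card (map_neighborFinset_induce (G := H) v) using 1
    · rw [card_map]; congr!
    · rw [Finset.toFinset_coe]
  rw [← Finset.sum_coe_sort S]
  refine ⟨#(H.induce S).edgeFinset, ?_⟩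
  rw [← two_mul, ← sum_degrees_eq_twice_card_edges]
  exact Fintype.sum_congr _ _ fun v => (hdeg v).symm

theorem even_sum_card_neighborFinset_sdiff (hH : ∀ v, Even (H.degree v)) (S : Finset V) :
    Even (∑ v ∈ S, #(H.neighborFinset v \ S)) := by
  have hsum : ∑ v ∈ S, #(H.neighborFinset v \ S) + ∑ v ∈ S, #(H.neighborFinset v ∩ S) =
      ∑ v ∈ S, H.degree v := by
    rw [← Finset.sum_add_distrib]
    exact Finset.sum_congr rfl fun v _ => Finset.card_sdiff_add_card_inter _ _
  have := hsum ▸ Finset.even_sum _ fun v _ => hH v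
  exact (Nat.even_add.mp this).mpr (H.even_sum_card_neighborFinset_inter S)

end SimpleGraph

section CycleGraph

variable {V : Type*}

theorem isHamCycleOn_map_cycleGraph {n : ℕ} (hn : 3 ≤ n) (e : Fin n ≃ V) :
    IsHamCycleOn ((cycleGraph n).map e.toEmbedding) := by
  obtain ⟨n, rfl⟩ : ∃ m, n = m + 3 := ⟨n - 3, by omega⟩
  refine ⟨(Iso.map e _).connected_iff.mp cycleGraph_connected, fun v => ?_⟩
  obtain ⟨i, rfl⟩ := e.surjective v
  rw [← Equiv.coe_toEmbedding, neighborSet_map,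
    Set.ncard_image_of_injective _ e.toEmbedding.injective, ← coe_neighborFinset,
    Set.ncard_coe_finset, card_neighborFinset_eq_degree,
    cycleGraph_degree_three_le]

theorem map_cycleGraph_le {G : SimpleGraph V} {n : ℕ} (e : Fin n ≃ V)
    (he : ∀ i, G.Adj (e i) (e (finRotate n i))) : (cycleGraph n).map e.toEmbedding ≤ G := by
  rw [map_le_iff_le_comap]
  intro i j hij
  match n, i, j, hij with
  | n + 2, i, j, hij =>
    rcases cycleGraph_adj.mp hij with h | h
    · simpa [sub_eq_iff_eq_add'.mp h] using (he j).symm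
    · simpa [sub_eq_iff_eq_add'.mp h] using he i

end CycleGraph

section ExGraph

variable {k : ℕ}

theorem exGraph_adj_inl_inl {a b : Fin (2 * k + 1)} :
    (exGraph k).Adj (inl a) (inl b) ↔ a ≠ b := by
  simp [exGraph, exRel]

theorem exGraph_adj_inr_inr {a b : Fin (2 * k + 1)} :
    (exGraph k).Adj (inr a) (inr b) ↔ a ≠ b := by
  simp [exGraph, exRel]

theorem exGraph_adj_inl_inr {a b : Fin (2 * k + 1)} :
    (exGraph k).Adj (inl a) (inr b) ↔ a = b ∧ (a = 0 ∨ a = 1) := by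
  simp only [exGraph, fromRel_adj, exRel, ne_eq, reduceCtorEq, not_false_eq_true, true_and,
    or_false]
  rcases k with _ | k
  · simp [Fin.ext_iff]
  · have h1 : ((1 : Fin (2 * (k + 1) + 1)) : ℕ) = 1 := Fin.val_one_of_one_lt (by omega)
    rw [Fin.ext_iff, Fin.ext_iff, Fin.ext_iff, h1, Fin.val_zero]
    omega

/-- The Hamilton cycle `inl 0, inl 2, …, inl 2k, inl 1, inr 1, inr 2, …, inr 2k, inr 0`. -/
def hamOrder (k : ℕ) (i : Fin (4 * k + 2)) : Fin (2 * k + 1) ⊕ Fin (2 * k + 1) :=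
  if h : i.val ≤ 2 * k then
    inl ⟨if i.val = 0 then 0 else if i.val = 2 * k then 1 else i.val + 1,
      by split_ifs <;> omega⟩
  else inr ⟨if i.val = 4 * k + 1 then 0 else i.val - 2 * k, by split_ifs <;> omega⟩

theorem hamOrder_injective : Function.Injective (hamOrder k) := by
  intro i j hij
  have := i.isLt; have := j.isLt
  rw [Fin.ext_iff]
  by_cases hi : i.val ≤ 2 * k <;> by_cases hj : j.val ≤ 2 * k <;>
    simp only [hamOrder, hi, hj, dite_true, dite_false, inl.injEq, inr.injEq, Fin.mk.injEq,
      reduceCtorEq] at hij <;> split_ifs at hij <;> omega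

theorem exGraph_adj_hamOrder_finRotate (hk : 0 < k) (i : Fin (4 * k + 2)) :
    (exGraph k).Adj (hamOrder k i) (hamOrder k (finRotate _ i)) := by
  have := i.isLt
  have hrot :
      (finRotate _ i).val = i.val + 1 ∨ (i.val = 4 * k + 1 ∧ (finRotate _ i).val = 0) := by
    rw [coe_finRotate (n := 4 * k + 1)]
    split_ifs <;> simp_all [Fin.ext_iff]
  have h1 : ((1 : Fin (2 * k + 1)) : ℕ) = 1 := Fin.val_one_of_one_lt (by omega)
  by_cases hi : i.val ≤ 2 * k <;> by_cases hj : (finRotate _ i).val ≤ 2 * k <;>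
    simp only [hamOrder, hi, hj, dite_true, dite_false, exGraph_adj_inl_inl, exGraph_adj_inr_inr,
      exGraph_adj_inl_inr, adj_comm _ (inr _) (inl _), ne_eq, Fin.ext_iff, h1, Fin.val_zero] <;>
    split_ifs <;> first | omega | exact not_false

theorem exists_le_exGraph_isHamCycleOn (hk : 0 < k) :
    ∃ C, C ≤ exGraph k ∧ IsHamCycleOn C := by
  have hbij : Function.Bijective (hamOrder k) :=
    (Fintype.bijective_iff_injective_and_card _).mpr ⟨hamOrder_injective, by simp; omega⟩
  let e := Equiv.ofBijective _ hbij
  exact ⟨_, map_cycleGraph_le e (exGraph_adj_hamOrder_finRotate hk),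
    isHamCycleOn_map_cycleGraph (by omega) e⟩

theorem two_mul_le_ncard_neighborSet_exGraph (v : Fin (2 * k + 1) ⊕ Fin (2 * k + 1)) :
    2 * k ≤ ((exGraph k).neighborSet v).ncard := by
  cases v with
  | inl a =>
    refine (Set.ncard_image_compl_singleton inl_injective a).symm.le.trans (Set.ncard_le_ncard ?_)
    rintro _ ⟨b, hb, rfl⟩
    exact exGraph_adj_inl_inl.mpr (Ne.symm hb)
  | inr a =>
    refine (Set.ncard_image_compl_singleton inr_injective a).symm.le.trans (Set.ncard_le_ncard ?_)
    rintro _ ⟨b, hb, rfl⟩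
    exact exGraph_adj_inr_inr.mpr (Ne.symm hb)

theorem neighborSet_exGraph_inl {a : Fin (2 * k + 1)} (h0 : a ≠ 0) (h1 : a ≠ 1) :
    (exGraph k).neighborSet (inl a) = inl '' {a}ᶜ := by
  ext (b | b) <;> simp [exGraph_adj_inl_inl, exGraph_adj_inl_inr, h0, h1, eq_comm]

theorem exists_ncard_neighborSet_exGraph_eq (hk : 0 < k) :
    ∃ v, ((exGraph k).neighborSet v).ncard = 2 * k := by
  have h0 : (⟨2, by omega⟩ : Fin (2 * k + 1)) ≠ 0 := by
    rw [Ne, Fin.ext_iff, Fin.val_zero]; simp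
  have h1 : (⟨2, by omega⟩ : Fin (2 * k + 1)) ≠ 1 := by
    rw [Ne, Fin.ext_iff, Fin.val_one_of_one_lt (by omega)]; simp
  exact ⟨_, neighborSet_exGraph_inl h0 h1 ▸ Set.ncard_image_compl_singleton inl_injective _⟩

end ExGraph

section TwoFactor

variable {k : ℕ} {H : SimpleGraph (Fin (2 * k + 1) ⊕ Fin (2 * k + 1))}

open Classical in
noncomputable def crossIndices (d : H.ConnectedComponent) : Finset (Fin (2 * k + 1)) :=
  {a | inl a ∈ d.supp ∧ H.Adj (inl a) (inr a)}

theorem mem_crossIndices {d : H.ConnectedComponent} {a : Fin (2 * k + 1)} :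
    a ∈ crossIndices d ↔ inl a ∈ d.supp ∧ H.Adj (inl a) (inr a) := by
  simp [crossIndices]

theorem crossIndices_subset (hH : H ≤ exGraph k) (d : H.ConnectedComponent) :
    crossIndices d ⊆ {0, 1} := by
  intro a ha
  simpa using (exGraph_adj_inl_inr.mp (hH (mem_crossIndices.mp ha).2)).2

theorem crossIndices_nonempty (hH : H ≤ exGraph k) {d : H.ConnectedComponent}
    (hl : ¬ d.supp ⊆ Set.range inl) (hr : ¬ d.supp ⊆ Set.range inr) :
    (crossIndices d).Nonempty := by
  classical
  obtain ⟨_, ha, a, rfl⟩ : ∃ v ∈ d.supp, v ∈ Set.range inl := by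
    simpa [Set.not_subset, ← Set.compl_range_inr] using hr
  obtain ⟨_, hb, b, rfl⟩ : ∃ v ∈ d.supp, v ∈ Set.range inr := by
    simpa [Set.not_subset, ← Set.compl_range_inl] using hl
  obtain ⟨p⟩ := d.reachable_of_mem_supp ha hb
  obtain ⟨⟨⟨_, y⟩, hxy⟩, hd, ⟨a', rfl⟩, hy⟩ :=
    p.exists_boundary_dart (Set.range inl) ⟨a, rfl⟩ (by simp)
  obtain ⟨b', rfl⟩ : y ∈ Set.range inr := Set.compl_range_inl ▸ hy
  obtain ⟨rfl, -⟩ := exGraph_adj_inl_inr.mp (hH hxy)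
  have hreach := (p.takeUntil _ (p.dart_fst_mem_support_of_mem_darts hd)).reachable
  exact ⟨a', mem_crossIndices.mpr ⟨(ConnectedComponent.sound hreach).symm.trans ha, hxy⟩⟩

theorem even_card_crossIndices (hH : IsTwoFactor (exGraph k) H) (d : H.ConnectedComponent) :
    Even #(crossIndices d) := by
  classical
  set A : Finset (Fin (2 * k + 1)) := {a | inl a ∈ d.supp}
  have hdeg (v) : Even (H.degree v) := by
    rw [← card_neighborFinset_eq_degree, neighborFinset_def, ← Set.ncard_eq_toFinset_card',
      hH.2 v]
    exact even_two
  -- the edges of `H` leaving the left half of `d` are its matching edges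
  have hleave (a) (ha : a ∈ A) :
      #(H.neighborFinset (inl a) \ A.map .inl) = if H.Adj (inl a) (inr a) then 1 else 0 := by
    have : H.neighborFinset (inl a) \ A.map .inl =
        ({inr a} : Finset _).filter (H.Adj (inl a)) := by
      ext (b | b)
      · simpa [A] using d.mem_supp_of_adj_mem_supp (by simpa [A] using ha)
      · simpa using fun h => (exGraph_adj_inl_inr.mp (hH.1 h)).1.symm
    rw [this, filter_singleton]
    split_ifs <;> rfl
  have hcount : ∑ v ∈ A.map .inl, #(H.neighborFinset v \ A.map .inl) = #(crossIndices d) := by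
    rw [sum_map]
    refine (sum_congr rfl hleave).trans ?_
    rw [sum_boole, filter_filter]
    simp [crossIndices]
  exact hcount ▸ H.even_sum_card_neighborFinset_sdiff hdeg (A.map .inl)

theorem crossIndices_eq_pair (hk : 0 < k) (hH : IsTwoFactor (exGraph k) H)
    {d : H.ConnectedComponent} (hl : ¬ d.supp ⊆ Set.range inl)
    (hr : ¬ d.supp ⊆ Set.range inr) :
    crossIndices d = {0, 1} := by
  refine eq_of_subset_of_card_le (crossIndices_subset hH.1 d) ?_
  have hpos := (crossIndices_nonempty hH.1 hl hr).card_pos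
  obtain ⟨m, hm⟩ := even_card_crossIndices hH d
  rw [card_pair (Fin.zero_ne_one_of_one_lt (by omega))]
  omega

theorem ncard_supp_add_two_le (hk : 0 < k) (hH : IsTwoFactor (exGraph k) H)
    {c c' : H.ConnectedComponent} (hcc : c ≠ c') (hc : 2 * k + 1 < c.supp.ncard) :
    c'.supp.ncard + 2 ≤ 2 * k + 1 := by
  have hports := crossIndices_eq_pair hk hH
    (fun h => hc.not_ge (by simpa using Set.ncard_le_of_subset_range inl_injective h))
    (fun h => hc.not_ge (by simpa using Set.ncard_le_of_subset_range inr_injective h))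
  have hc_ports (i : Fin (2 * k + 1)) (hi : i = 0 ∨ i = 1) :
      inl i ∈ c.supp ∧ inr i ∈ c.supp := by
    have := mem_crossIndices.mp (hports ▸ (by simpa using hi) : i ∈ crossIndices c)
    exact ⟨this.1, c.mem_supp_of_adj_mem_supp this.1 this.2⟩
  have hnot {v} (hv : v ∈ c.supp) : v ∉ c'.supp := fun hv' =>
    hcc (ConnectedComponent.eq_of_common_vertex hv hv')
  have h01 : (0 : Fin (2 * k + 1)) ≠ 1 := Fin.zero_ne_one_of_one_lt (by omega)
  by_cases hl : c'.supp ⊆ Set.range inl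
  · simpa using Set.ncard_add_two_le_of_subset_range inl_injective hl h01
      (hnot (hc_ports 0 (.inl rfl)).1) (hnot (hc_ports 1 (.inr rfl)).1)
  by_cases hr : c'.supp ⊆ Set.range inr
  · simpa using Set.ncard_add_two_le_of_subset_range inr_injective hr h01
      (hnot (hc_ports 0 (.inl rfl)).2) (hnot (hc_ports 1 (.inr rfl)).2)
  obtain ⟨a, ha⟩ := crossIndices_nonempty hH.1 hl hr
  have := (hc_ports a (by simpa using crossIndices_subset hH.1 c' ha)).1
  exact absurd (mem_crossIndices.mp ha).1 (hnot this)

end TwoFactor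


theorem stmt17 (k : ℕ) (hk : 3 ≤ k) :
    -- G is Hamiltonian
    (∃ C : SimpleGraph (Fin (2 * k + 1) ⊕ Fin (2 * k + 1)),
      C ≤ exGraph k ∧ IsHamCycleOn C) ∧
    -- δ(G) = 2k = n/2 - 1, where n = 4k + 2
    ((∀ x, 2 * k ≤ ((exGraph k).neighborSet x).ncard) ∧
      (∃ x, ((exGraph k).neighborSet x).ncard = 2 * k) ∧
      2 * k = (4 * k + 2) / 2 - 1) ∧
    -- G has no 2-factor consisting of exactly two cycles of lengths 2k+2 and 2k
    ¬ ∃ H : SimpleGraph (Fin (2 * k + 1) ⊕ Fin (2 * k + 1)),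
        IsTwoFactor (exGraph k) H ∧ Nat.card H.ConnectedComponent = 2 ∧
        ∃ c c' : H.ConnectedComponent, c ≠ c' ∧
          c.supp.ncard = 2 * k + 2 ∧ c'.supp.ncard = 2 * k := by
  have hk : 0 < k := by omega
  refine ⟨exists_le_exGraph_isHamCycleOn hk, ⟨two_mul_le_ncard_neighborSet_exGraph,
    exists_ncard_neighborSet_exGraph_eq hk, by omega⟩, ?_⟩
  rintro ⟨H, hH, -, c, c', hcc, hc, hc'⟩
  have := ncard_supp_add_two_le hk hH hcc (by omega)
  omega
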